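/- Let G be a connected graph on n ≥ 2 vertices, X = [x_1,...,x_n]ᵀ ∈ R^{n×d}, and A ∈ R^{n×n} a doubly stochastic matrix such that (AᵀA)_{i*j*} ≥ δ > 0, where {i*, j*} is an edge of G maximizing ||x_i − x_j|| over edges. Then V(AX) ≤ (1 − 2δ/((n−1)·diam(G)²)) · V(X), where V(X) = Σ_i ||x_i − x̄||². -/

import Mathlib

/-!
Put `y = A x` and `B = Aᵀ A`, again doubly stochastic. Expanding squares gives the dissipation
identity `V(y) = V(x) - ½ ∑_{j,k} B_{jk} ‖x_j - x_k‖²`; keeping only the two terms of the pair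
`(i*, j*)` yields `V(y) ≤ V(x) - δ ‖x_{i*} - x_{j*}‖²`. On the other hand
`2 n V(x) = ∑_{i,j} ‖x_i - x_j‖²`, and along a shortest path every `‖x_i - x_j‖` is at most
`diam(G) ‖x_{i*} - x_{j*}‖`, so `2 V(x) ≤ (n - 1) diam(G)² ‖x_{i*} - x_{j*}‖²`.
-/

open Finset Matrix
open scoped RealInnerProductSpace

section Scatter

variable {ι E : Type*} [Fintype ι] [NormedAddCommGroup E] [InnerProductSpace ℝ E]

/-- The paper's `V`: the sum of squared distances to the centroid. -/
noncomputable def scatter (x : ι → E) : ℝ :=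
  ∑ i, ‖x i - (Fintype.card ι : ℝ)⁻¹ • ∑ k, x k‖ ^ 2

lemma scatter_eq (x : ι → E) :
    scatter x = ∑ i, ‖x i‖ ^ 2 - (Fintype.card ι : ℝ)⁻¹ * ‖∑ i, x i‖ ^ 2 := by
  have hcard (N : ℝ) : N * N⁻¹ ^ 2 = N⁻¹ := by
    rcases eq_or_ne N 0 with h | h
    · simp [h]
    · field_simp
  simp_rw [scatter, norm_sub_sq_real, sum_add_distrib, sum_sub_distrib, ← mul_sum, ← sum_inner,
    real_inner_smul_right, real_inner_self_eq_norm_sq, norm_smul, sum_const, card_univ,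
    nsmul_eq_mul, Real.norm_eq_abs, abs_inv, Nat.abs_cast, mul_pow, ← mul_assoc, hcard]
  ring

lemma card_mul_scatter (x : ι → E) :
    Fintype.card ι * scatter x = Fintype.card ι * ∑ i, ‖x i‖ ^ 2 - ‖∑ i, x i‖ ^ 2 := by
  rcases isEmpty_or_nonempty ι with hι | hι
  · simp
  · rw [scatter_eq, mul_sub, ← mul_assoc, mul_inv_cancel₀ (by positivity), one_mul]

lemma sum_sum_norm_sub_sq (x : ι → E) :
    ∑ i, ∑ j, ‖x i - x j‖ ^ 2 = 2 * Fintype.card ι * scatter x := by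
  simp_rw [norm_sub_sq_real, sum_add_distrib, sum_sub_distrib, ← mul_sum, ← inner_sum,
    ← sum_inner, real_inner_self_eq_norm_sq, sum_const, card_univ, nsmul_eq_mul]
  rw [mul_assoc, card_mul_scatter, ← mul_sum]
  ring

lemma two_mul_scatter_le [Nonempty ι] (x : ι → E) {C : ℝ} (hC : ∀ i j, ‖x i - x j‖ ≤ C) :
    2 * scatter x ≤ (Fintype.card ι - 1) * C ^ 2 := by
  classical
  have hrow (i : ι) : ∑ j, ‖x i - x j‖ ^ 2 ≤ (Fintype.card ι - 1) * C ^ 2 := by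
    rw [← add_sum_erase _ _ (mem_univ i), sub_self, norm_zero, zero_pow two_ne_zero, zero_add]
    refine (sum_le_card_nsmul _ _ (C ^ 2) fun j _ => ?_).trans_eq ?_
    · exact pow_le_pow_left₀ (norm_nonneg _) (hC i j) 2
    · rw [card_erase_of_mem (mem_univ i), card_univ, nsmul_eq_mul,
        Nat.cast_sub Fintype.card_pos, Nat.cast_one]
  have hsum := sum_le_sum fun i (_ : i ∈ univ) => hrow i
  rw [sum_sum_norm_sub_sq, sum_const, card_univ, nsmul_eq_mul, mul_comm 2, mul_assoc] at hsum
  exact le_of_mul_le_mul_left hsum (by exact_mod_cast Fintype.card_pos)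

lemma sum_sum_smul_of_sum_col_eq_one {A : Matrix ι ι ℝ} (hcol : ∀ j, ∑ i, A i j = 1)
    (x : ι → E) : ∑ i, ∑ j, A i j • x j = ∑ j, x j := by
  rw [sum_comm]
  simp_rw [← sum_smul, hcol, one_smul]

lemma sum_norm_sum_smul_sq (A : Matrix ι ι ℝ) (x : ι → E) :
    ∑ i, ‖∑ j, A i j • x j‖ ^ 2 = ∑ j, ∑ k, (Aᵀ * A) j k * ⟪x j, x k⟫ := by
  simp_rw [← real_inner_self_eq_norm_sq, sum_inner, inner_sum, real_inner_smul_left,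
    real_inner_smul_right]
  simp only [mul_apply, transpose_apply, sum_mul]
  rw [sum_comm]
  refine sum_congr rfl fun j _ => ?_
  rw [sum_comm]
  exact sum_congr rfl fun k _ => sum_congr rfl fun i _ => by ring

lemma sum_sum_mul_inner_of_mem_doublyStochastic [DecidableEq ι] {B : Matrix ι ι ℝ}
    (hB : B ∈ doublyStochastic ℝ ι) (x : ι → E) :
    ∑ j, ∑ k, B j k * ⟪x j, x k⟫ =
      ∑ j, ‖x j‖ ^ 2 - 2⁻¹ * ∑ j, ∑ k, B j k * ‖x j - x k‖ ^ 2 := by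
  have hrow : ∑ j, ∑ k, B j k * ‖x j‖ ^ 2 = ∑ j, ‖x j‖ ^ 2 := by
    simp_rw [← sum_mul, sum_row_of_mem_doublyStochastic hB, one_mul]
  have hcol : ∑ j, ∑ k, B j k * ‖x k‖ ^ 2 = ∑ k, ‖x k‖ ^ 2 := by
    rw [sum_comm]
    simp_rw [← sum_mul, sum_col_of_mem_doublyStochastic hB, one_mul]
  simp_rw [norm_sub_sq_real, mul_add, mul_sub, sum_add_distrib, sum_sub_distrib, hrow, hcol,
    mul_left_comm _ (2 : ℝ), ← mul_sum]
  ring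

lemma scatter_sum_smul_of_mem_doublyStochastic [DecidableEq ι] {A : Matrix ι ι ℝ}
    (hA : A ∈ doublyStochastic ℝ ι) (x : ι → E) :
    scatter (fun i => ∑ j, A i j • x j) =
      scatter x - 2⁻¹ * ∑ j, ∑ k, (Aᵀ * A) j k * ‖x j - x k‖ ^ 2 := by
  have hAA : Aᵀ * A ∈ doublyStochastic ℝ ι :=
    mul_mem (transpose_mem_doublyStochastic_iff.2 hA) hA
  rw [scatter_eq, scatter_eq,
    sum_sum_smul_of_sum_col_eq_one (fun j => sum_col_of_mem_doublyStochastic hA j),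
    sum_norm_sum_smul_sq, sum_sum_mul_inner_of_mem_doublyStochastic hAA]
  ring

lemma add_le_sum_sum_of_nonneg {f : ι → ι → ℝ} (hf : ∀ k l, 0 ≤ f k l) {i j : ι}
    (hij : i ≠ j) : f i j + f j i ≤ ∑ k, ∑ l, f k l := by
  classical
  calc f i j + f j i ≤ ∑ l, f i l + ∑ l, f j l := by
        gcongr <;> exact single_le_sum (fun l _ => hf _ l) (mem_univ _)
    _ = ∑ k ∈ {i, j}, ∑ l, f k l := (sum_pair (f := fun k => ∑ l, f k l) hij).symm
    _ ≤ ∑ k, ∑ l, f k l :=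
        sum_le_sum_of_subset_of_nonneg (subset_univ _) fun k _ _ => sum_nonneg fun l _ => hf k l

lemma scatter_sum_smul_le_of_mem_doublyStochastic [DecidableEq ι] {A : Matrix ι ι ℝ}
    (hA : A ∈ doublyStochastic ℝ ι) (x : ι → E) (i j : ι) :
    scatter (fun i => ∑ j, A i j • x j) ≤ scatter x - (Aᵀ * A) i j * ‖x i - x j‖ ^ 2 := by
  have hB : Aᵀ * A ∈ doublyStochastic ℝ ι :=
    mul_mem (transpose_mem_doublyStochastic_iff.2 hA) hA
  set f : ι → ι → ℝ := fun k l => (Aᵀ * A) k l * ‖x k - x l‖ ^ 2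
  have hf (k l : ι) : 0 ≤ f k l := mul_nonneg (nonneg_of_mem_doublyStochastic hB) (sq_nonneg _)
  rw [scatter_sum_smul_of_mem_doublyStochastic hA]
  obtain rfl | hij := eq_or_ne i j
  · simpa using sum_nonneg fun k _ => sum_nonneg fun l _ => hf k l
  · have hsymm : f j i = f i j := by
      simp only [f, norm_sub_rev (x j), (isSymm_transpose_mul_self A).apply i j]
    have := add_le_sum_sum_of_nonneg hf hij
    linarith

end Scatter

namespace SimpleGraph

variable {V α : Type*} [SeminormedAddCommGroup α] {G : SimpleGraph V} {f : V → α} {C : ℝ}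

lemma Walk.norm_sub_le_length_mul (hf : ∀ u v, G.Adj u v → ‖f u - f v‖ ≤ C) {u v : V}
    (p : G.Walk u v) : ‖f u - f v‖ ≤ p.length * C := by
  induction p with
  | nil => simp
  | @cons u v w huv p ih =>
    calc ‖f u - f w‖ ≤ ‖f u - f v‖ + ‖f v - f w‖ := norm_sub_le_norm_sub_add_norm_sub _ _ _
      _ ≤ C + p.length * C := add_le_add (hf u v huv) ih
      _ = (p.cons huv).length * C := by rw [Walk.length_cons]; push_cast; ring

lemma Connected.norm_sub_le_diam_mul [Finite V] (hG : G.Connected) (hC : 0 ≤ C)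
    (hf : ∀ u v, G.Adj u v → ‖f u - f v‖ ≤ C) (u v : V) :
    ‖f u - f v‖ ≤ G.diam * C := by
  have := hG.nonempty
  obtain ⟨p, hp⟩ := hG.exists_walk_length_eq_dist u v
  have hdiam : G.dist u v ≤ G.diam :=
    dist_le_diam (connected_iff_ediam_ne_top.1 hG)
  calc ‖f u - f v‖ ≤ p.length * C := p.norm_sub_le_length_mul hf
    _ ≤ G.diam * C := by rw [hp]; gcongr

end SimpleGraph

theorem stmt_8_general (n d : ℕ) (G : SimpleGraph (Fin n)) (hG : G.Connected)
    (x : Fin n → EuclideanSpace ℝ (Fin d)) (A : Matrix (Fin n) (Fin n) ℝ)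
    (hpos : ∀ i j, 0 ≤ A i j)
    (hrow : ∀ i, ∑ j, A i j = 1) (hcol : ∀ j, ∑ i, A i j = 1)
    (istar jstar : Fin n)
    (hmax : ∀ i j : Fin n, G.Adj i j → ‖x i - x j‖ ≤ ‖x istar - x jstar‖)
    (δ : ℝ) (hδ : 0 < δ) (hAδ : δ ≤ (A.transpose * A) istar jstar)
    (V : (Fin n → EuclideanSpace ℝ (Fin d)) → ℝ)
    (hV : ∀ y : Fin n → EuclideanSpace ℝ (Fin d),
      V y = ∑ i, ‖y i - (n : ℝ)⁻¹ • ∑ k, y k‖ ^ 2) :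
    V (fun i => ∑ j, A i j • x j) ≤
      (1 - 2 * δ / (((n : ℝ) - 1) * (G.diam : ℝ) ^ 2)) * V x := by
  have hVs : V = scatter := funext fun y => by rw [hV, scatter, Fintype.card_fin]
  have hA : A ∈ doublyStochastic ℝ (Fin n) := mem_doublyStochastic_iff_sum.2 ⟨hpos, hrow, hcol⟩
  have := hG.nonempty
  set e := ‖x istar - x jstar‖
  set c := ((n : ℝ) - 1) * G.diam ^ 2
  have hcontract : scatter (fun i => ∑ j, A i j • x j) ≤ scatter x - δ * e ^ 2 :=
    (scatter_sum_smul_le_of_mem_doublyStochastic hA x istar jstar).trans (by gcongr)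
  have hspread : 2 * scatter x ≤ c * e ^ 2 := by
    have := two_mul_scatter_le x (hG.norm_sub_le_diam_mul (norm_nonneg _) hmax)
    rwa [Fintype.card_fin, mul_pow, ← mul_assoc] at this
  have hc : 0 ≤ c := by
    have : (1 : ℝ) ≤ n := by exact_mod_cast istar.pos
    positivity
  have hrate : 2 * δ / c * scatter x ≤ δ * e ^ 2 := by
    obtain hc0 | hc0 := hc.eq_or_lt
    · rw [← hc0, div_zero, zero_mul]
      positivity
    · calc 2 * δ / c * scatter x = δ / c * (2 * scatter x) := by ring
        _ ≤ δ / c * (c * e ^ 2) := by gcongr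
        _ = δ * e ^ 2 := by field_simp
  rw [hVs, sub_mul, one_mul]
  linarith

theorem stmt_8 (n d : ℕ) (hn : 2 ≤ n) (G : SimpleGraph (Fin n)) (hG : G.Connected)
    (x : Fin n → EuclideanSpace ℝ (Fin d)) (A : Matrix (Fin n) (Fin n) ℝ)
    (hpos : ∀ i j, 0 ≤ A i j)
    (hrow : ∀ i, ∑ j, A i j = 1) (hcol : ∀ j, ∑ i, A i j = 1)
    (istar jstar : Fin n) (hadj : G.Adj istar jstar)
    (hmax : ∀ i j : Fin n, G.Adj i j → ‖x i - x j‖ ≤ ‖x istar - x jstar‖)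
    (δ : ℝ) (hδ : 0 < δ) (hAδ : δ ≤ (A.transpose * A) istar jstar)
    (V : (Fin n → EuclideanSpace ℝ (Fin d)) → ℝ)
    (hV : ∀ y : Fin n → EuclideanSpace ℝ (Fin d),
      V y = ∑ i, ‖y i - (n : ℝ)⁻¹ • ∑ k, y k‖ ^ 2) :
    V (fun i => ∑ j, A i j • x j) ≤
      (1 - 2 * δ / (((n : ℝ) - 1) * (G.diam : ℝ) ^ 2)) * V x :=
  stmt_8_general n d G hG x A hpos hrow hcol istar jstar hmax δ hδ hAδ V hV
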